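/- For r > 0, the radial Laplacian in real dimension 2 applied to F(r) = log(1 − e^{−r²}) + r²/(e^{r²} − 1) satisfies (d²/dr² + (1/r) d/dr) F(r) = (8(e^{r²}−1)² − 16 r² e^{r²}(e^{r²}−1) + 4 r⁴ e^{r²}(e^{r²}+1)) / (e^{r²}−1)³. -/

import Mathlib

open Real

noncomputable def Gr : ℝ → ℝ := fun s =>
  (4 * s * (Real.exp (s ^ 2) - 1) - 2 * s ^ 3 * Real.exp (s ^ 2)) /
    (Real.exp (s ^ 2) - 1) ^ 2

lemma expsq_gt_one {s : ℝ} (hs : s ≠ 0) : 1 < Real.exp (s ^ 2) := by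
  have h : 0 < s ^ 2 := by positivity
  calc 1 = Real.exp 0 := (Real.exp_zero).symm
  _ < _ := Real.exp_lt_exp.mpr h

lemma hasDerivF {s : ℝ} (hs : s ≠ 0) :
    HasDerivAt (fun s : ℝ =>
      Real.log (1 - Real.exp (-s ^ 2)) + s ^ 2 / (Real.exp (s ^ 2) - 1)) (Gr s) s := by
  have hE := expsq_gt_one hs
  have hE1 : Real.exp (s ^ 2) - 1 ≠ 0 := by linarith
  have hpos : 0 < 1 - Real.exp (-s ^ 2) := by
    have h1 : Real.exp (-s ^ 2) < 1 := by
      rw [Real.exp_lt_one_iff]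
      have : 0 < s ^ 2 := by positivity
      linarith
    linarith
  have h1 : HasDerivAt (fun s : ℝ => s ^ 2) (2 * s) s := by
    simpa using hasDerivAt_pow 2 s
  have h2 : HasDerivAt (fun s : ℝ => Real.exp (-s ^ 2))
      (Real.exp (-s ^ 2) * (-(2 * s))) s := h1.neg.exp
  have h3 : HasDerivAt (fun s : ℝ => Real.log (1 - Real.exp (-s ^ 2)))
      (-(Real.exp (-s ^ 2) * (-(2 * s))) / (1 - Real.exp (-s ^ 2))) s :=
    (h2.const_sub 1).log (ne_of_gt hpos)
  have hexp : HasDerivAt (fun s : ℝ => Real.exp (s ^ 2))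
      (Real.exp (s ^ 2) * (2 * s)) s := h1.exp
  have h4 : HasDerivAt (fun s : ℝ => s ^ 2 / (Real.exp (s ^ 2) - 1))
      ((2 * s * (Real.exp (s ^ 2) - 1) - s ^ 2 * (Real.exp (s ^ 2) * (2 * s))) /
        (Real.exp (s ^ 2) - 1) ^ 2) s := h1.div (hexp.sub_const 1) hE1
  have h := h3.add h4
  refine h.congr_deriv ?_
  have hne : Real.exp (s ^ 2) ≠ 0 := Real.exp_ne_zero _
  have hpos' : (1 : ℝ) - Real.exp (-s ^ 2) ≠ 0 := ne_of_gt hpos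
  rw [Gr]
  rw [Real.exp_neg] at hpos' ⊢
  field_simp
  ring

theorem radial_laplacian_dim1 (r : ℝ) (hr : 0 < r) :
    deriv (deriv (fun s : ℝ =>
        Real.log (1 - Real.exp (-s ^ 2)) + s ^ 2 / (Real.exp (s ^ 2) - 1))) r
      + (1 / r) * deriv (fun s : ℝ =>
          Real.log (1 - Real.exp (-s ^ 2)) + s ^ 2 / (Real.exp (s ^ 2) - 1)) r
      = (8 * (Real.exp (r ^ 2) - 1) ^ 2
          - 16 * r ^ 2 * Real.exp (r ^ 2) * (Real.exp (r ^ 2) - 1)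
          + 4 * r ^ 4 * Real.exp (r ^ 2) * (Real.exp (r ^ 2) + 1))
        / (Real.exp (r ^ 2) - 1) ^ 3 := by
  have hE := expsq_gt_one hr.ne'
  have hE1 : Real.exp (r ^ 2) - 1 ≠ 0 := by linarith
  have hfg : (deriv (fun s : ℝ =>
      Real.log (1 - Real.exp (-s ^ 2)) + s ^ 2 / (Real.exp (s ^ 2) - 1))) =ᶠ[nhds r] Gr := by
    filter_upwards [eventually_ne_nhds hr.ne'] with s hs
    exact (hasDerivF hs).deriv
  -- derivative of Gr at r
  have h1 : HasDerivAt (fun s : ℝ => s ^ 2) (2 * r) r := by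
    simpa using hasDerivAt_pow 2 r
  have hexp : HasDerivAt (fun s : ℝ => Real.exp (s ^ 2))
      (Real.exp (r ^ 2) * (2 * r)) r := h1.exp
  have hs3 : HasDerivAt (fun s : ℝ => s ^ 3) (3 * r ^ 2) r := by
    simpa using hasDerivAt_pow 3 r
  have hN : HasDerivAt (fun s : ℝ =>
      4 * s * (Real.exp (s ^ 2) - 1) - 2 * s ^ 3 * Real.exp (s ^ 2))
      (4 * (Real.exp (r ^ 2) - 1) + 4 * r * (Real.exp (r ^ 2) * (2 * r))
        - (2 * (3 * r ^ 2) * Real.exp (r ^ 2) + 2 * r ^ 3 * (Real.exp (r ^ 2) * (2 * r)))) r := by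
    have ha : HasDerivAt (fun s : ℝ => 4 * s) 4 r := by
      simpa using (hasDerivAt_id r).const_mul 4
    have hb := ha.mul (hexp.sub_const 1)
    have hc := (hs3.const_mul 2).mul hexp
    exact (hb.sub hc).congr_deriv (by ring)
  have hD : HasDerivAt (fun s : ℝ => (Real.exp (s ^ 2) - 1) ^ 2)
      (2 * (Real.exp (r ^ 2) - 1) ^ 1 * (Real.exp (r ^ 2) * (2 * r))) r :=
    (hexp.sub_const 1).pow 2
  have hG : HasDerivAt Gr
      (((4 * (Real.exp (r ^ 2) - 1) + 4 * r * (Real.exp (r ^ 2) * (2 * r))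
        - (2 * (3 * r ^ 2) * Real.exp (r ^ 2) + 2 * r ^ 3 * (Real.exp (r ^ 2) * (2 * r))))
          * (Real.exp (r ^ 2) - 1) ^ 2
        - (4 * r * (Real.exp (r ^ 2) - 1) - 2 * r ^ 3 * Real.exp (r ^ 2))
          * (2 * (Real.exp (r ^ 2) - 1) ^ 1 * (Real.exp (r ^ 2) * (2 * r))))
        / ((Real.exp (r ^ 2) - 1) ^ 2) ^ 2) r :=
    hN.div hD (pow_ne_zero 2 hE1)
  rw [hfg.deriv_eq, hG.deriv, (hasDerivF hr.ne').deriv, Gr]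
  field_simp
  ring
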